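/- arXiv:0706.0748 — 2 statements merged into one kernel-verified Lean document; each statement's English description precedes it below -/
import Mathlib

section
/- (Vanishing covariance of non-correlated paths) Fix N and s ≥ 1. For a closed path P = (i_0 → i_1 → ⋯ → i_{2s−1} → i_0) on the vertex set {1,…,N}, let X_P = ∏_{k=0}^{2s−1} a_{i_k i_{k+1}} (indices mod 2s). Suppose the entries {a_{ij}, 1 ≤ i ≤ j ≤ N} are independent, a_{ij} = a_{ji}, and E a_{ij} = 0. If two closed paths P_1 and P_2 of length 2s either (i) have no undirected edge in common, or (ii) some undirected edge of the union of P_1 and P_2 is traversed exactly once in total over both paths, then E[X_{P_1}·X_{P_2}] − E[X_{P_1}]·E[X_{P_2}] = 0. -/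
/-!
Identify each undirected edge `e = {i, j}` with the random variable `a_e = a_{ij}`; the edge
variables are then independent and centred, and `X_P` is the product of `a_e` over the multiset of
edges of `P`. If `P₁` and `P₂` share no edge, `X_{P₁}` and `X_{P₂}` are functions of disjoint
families of edge variables, hence independent. If some edge `e` is traversed exactly once by the
two paths together, then `a_e` is a factor, independent of the remaining ones, of `X_{P₁} X_{P₂}`
and of exactly one of `X_{P₁}`, `X_{P₂}`, so both terms of the covariance vanish.
-/

open MeasureTheory ProbabilityTheory Filter

/-- The cyclic successor of an index in `Fin L`. -/
def nextIdx {L : ℕ} (k : Fin L) : Fin L :=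
  ⟨((k : ℕ) + 1) % L, Nat.mod_lt _ k.pos⟩

/-- For a closed path `p = (i_0 → i_1 → ⋯ → i_{L-1} → i_0)` on the vertex set
`Fin N`, the random variable `X_P = ∏_{k=0}^{L-1} a_{i_k i_{k+1}}`
(indices taken cyclically). -/
noncomputable def pathX {Ω : Type*} {N L : ℕ} (a : Fin N → Fin N → Ω → ℝ)
    (p : Fin L → Fin N) (ω : Ω) : ℝ :=
  ∏ k : Fin L, a (p k) (p (nextIdx k)) ω

/-- The multiset of undirected edges (counted with multiplicity) of a closed
path `p` of length `L` on the vertex set `Fin N`. -/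
def pathEdges {N L : ℕ} (p : Fin L → Fin N) : Multiset (Sym2 (Fin N)) :=
  Finset.univ.val.map (fun k : Fin L => Sym2.mk (p k) (p (nextIdx k)))

namespace ProbabilityTheory

section RandomMonomial

variable {Ω ι : Type*} {f : ι → Ω → ℝ}

noncomputable def randomMonomial (f : ι → Ω → ℝ) (m : Multiset ι) (ω : Ω) : ℝ :=
  (m.map (f · ω)).prod

theorem randomMonomial_add (m₁ m₂ : Multiset ι) (ω : Ω) :
    randomMonomial f (m₁ + m₂) ω = randomMonomial f m₁ ω * randomMonomial f m₂ ω := by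
  simp only [randomMonomial, Multiset.map_add, Multiset.prod_add]

theorem randomMonomial_cons (i : ι) (m : Multiset ι) (ω : Ω) :
    randomMonomial f (i ::ₘ m) ω = f i ω * randomMonomial f m ω := by
  simp only [randomMonomial, Multiset.map_cons, Multiset.prod_cons]

theorem randomMonomial_singleton (i : ι) : randomMonomial f {i} = f i := by
  ext ω
  simp only [randomMonomial, Multiset.map_singleton, Multiset.prod_singleton]

theorem randomMonomial_eq_comp [DecidableEq ι] (m : Multiset ι) :
    randomMonomial f m =
      (fun x : m.toFinset → ℝ => ∏ i, x i ^ m.count ↑i) ∘ fun ω i => f i ω := by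
  ext ω
  rw [randomMonomial, Finset.prod_multiset_map_count, ← Finset.prod_coe_sort]
  rfl

theorem measurable_prod_pow_count [DecidableEq ι] (m : Multiset ι) :
    Measurable fun x : m.toFinset → ℝ => ∏ i, x i ^ m.count ↑i :=
  Finset.measurable_prod _ fun i _ => (measurable_pi_apply i).pow_const _

variable [MeasurableSpace Ω] {μ : Measure Ω}

theorem measurable_randomMonomial (hf : ∀ i, Measurable (f i)) (m : Multiset ι) :
    Measurable (randomMonomial f m) := by
  classical
  rw [randomMonomial_eq_comp]
  exact (measurable_prod_pow_count m).comp (measurable_pi_lambda _ fun i => hf i)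

theorem iIndepFun.indepFun_randomMonomial_of_disjoint (hind : iIndepFun f μ)
    (hf : ∀ i, Measurable (f i)) {m₁ m₂ : Multiset ι} (hm : Disjoint m₁ m₂) :
    IndepFun (randomMonomial f m₁) (randomMonomial f m₂) μ := by
  classical
  rw [randomMonomial_eq_comp, randomMonomial_eq_comp]
  exact (hind.indepFun_finset m₁.toFinset m₂.toFinset (Multiset.disjoint_toFinset.2 hm) hf).comp
    (measurable_prod_pow_count m₁) (measurable_prod_pow_count m₂)

theorem iIndepFun.integral_randomMonomial_eq_zero_of_count_eq_one (hind : iIndepFun f μ)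
    (hf : ∀ i, Measurable (f i)) {m : Multiset ι} {i : ι} [DecidableEq ι]
    (hi : m.count i = 1) (hmean : ∫ ω, f i ω ∂μ = 0) :
    ∫ ω, randomMonomial f m ω ∂μ = 0 := by
  have hmem : i ∈ m := Multiset.count_pos.1 (by omega)
  have hrest : Disjoint {i} (m.erase i) := by
    rw [Multiset.singleton_disjoint, ← Multiset.count_eq_zero, Multiset.count_erase_self, hi]
  have hindep := hind.indepFun_randomMonomial_of_disjoint hf hrest
  rw [randomMonomial_singleton] at hindep
  rw [← Multiset.cons_erase hmem]
  simp only [randomMonomial_cons]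
  rw [hindep.integral_fun_mul_eq_mul_integral (hf i).aestronglyMeasurable
    (measurable_randomMonomial hf _).aestronglyMeasurable, hmean, zero_mul]

end RandomMonomial

theorem iIndepFun.sym2_lift {Ω α β : Type*} [MeasurableSpace Ω] {μ : Measure Ω}
    [LinearOrder α] [MeasurableSpace β] {a : α → α → Ω → β} (hsymm : ∀ i j, a i j = a j i)
    (hind : iIndepFun (fun q : {q : α × α // q.1 ≤ q.2} => a q.1.1 q.1.2) μ) :
    iIndepFun (Sym2.lift ⟨a, hsymm⟩) μ :=
  (iIndepFun_precomp_of_bijective Sym2.sortEquiv.symm.bijective).1 hind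

end ProbabilityTheory

theorem pathX_eq_randomMonomial_pathEdges {Ω : Type*} {N L : ℕ} {a : Fin N → Fin N → Ω → ℝ}
    (hsymm : ∀ i j, a i j = a j i) (p : Fin L → Fin N) :
    pathX a p = randomMonomial (Sym2.lift ⟨a, hsymm⟩) (pathEdges p) := by
  ext ω
  simp only [pathX, randomMonomial, pathEdges, Multiset.map_map, Finset.prod_eq_multiset_prod]
  rfl

theorem covariance_of_uncorrelated_paths_vanishes_general
    {Ω : Type*} [MeasurableSpace Ω] (μ : Measure Ω)
    (N s : ℕ)
    (a : Fin N → Fin N → Ω → ℝ)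
    (hmeas : ∀ i j, Measurable (a i j))
    (hsymm : ∀ i j, a i j = a j i)
    (hindep : iIndepFun
      (fun q : {q : Fin N × Fin N // q.1 ≤ q.2} => a q.1.1 q.1.2) μ)
    (hmean : ∀ i j, ∫ ω, a i j ω ∂μ = 0)
    (p₁ p₂ : Fin (2 * s) → Fin N)
    (h : (∀ e, e ∈ pathEdges p₁ → e ∉ pathEdges p₂) ∨
      (∃ e, (pathEdges p₁ + pathEdges p₂).count e = 1)) :
    (∫ ω, pathX a p₁ ω * pathX a p₂ ω ∂μ) -
      (∫ ω, pathX a p₁ ω ∂μ) * (∫ ω, pathX a p₂ ω ∂μ) = 0 := by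
  simp only [pathX_eq_randomMonomial_pathEdges hsymm]
  set b : Sym2 (Fin N) → Ω → ℝ := Sym2.lift ⟨a, hsymm⟩
  have hb : iIndepFun b μ := hindep.sym2_lift hsymm
  have hbmeas : ∀ e, Measurable (b e) := Sym2.ind hmeas
  have hbmean : ∀ e, ∫ ω, b e ω ∂μ = 0 := Sym2.ind hmean
  rcases h with hdisj | ⟨e, he⟩
  · rw [(hb.indepFun_randomMonomial_of_disjoint hbmeas (Multiset.disjoint_left.2 (hdisj _))
      ).integral_fun_mul_eq_mul_integral (measurable_randomMonomial hbmeas _).aestronglyMeasurable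
      (measurable_randomMonomial hbmeas _).aestronglyMeasurable, sub_self]
  · have hzero {m : Multiset (Sym2 (Fin N))} (hm : m.count e = 1) :
        ∫ ω, randomMonomial b m ω ∂μ = 0 :=
      hb.integral_randomMonomial_eq_zero_of_count_eq_one hbmeas hm (hbmean e)
    simp only [← randomMonomial_add, hzero he, zero_sub, neg_eq_zero]
    rw [Multiset.count_add] at he
    rcases Nat.add_eq_one_iff.1 he with ⟨-, he₂⟩ | ⟨he₁, -⟩
    · rw [hzero he₂, mul_zero]
    · rw [hzero he₁, zero_mul]

theorem covariance_of_uncorrelated_paths_vanishes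
    {Ω : Type*} [MeasurableSpace Ω] (μ : Measure Ω) [IsProbabilityMeasure μ]
    (N s : ℕ) (hs : 1 ≤ s)
    (a : Fin N → Fin N → Ω → ℝ) (C : ℝ)
    (hmeas : ∀ i j, Measurable (a i j))
    (hsymm : ∀ i j, a i j = a j i)
    (hindep : iIndepFun
      (fun q : {q : Fin N × Fin N // q.1 ≤ q.2} => a q.1.1 q.1.2) μ)
    (hmean : ∀ i j, ∫ ω, a i j ω ∂μ = 0)
    (hbdd : ∀ i j, ∀ᵐ ω ∂μ, |a i j ω| ≤ C)
    (p₁ p₂ : Fin (2 * s) → Fin N)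
    (h : (∀ e, e ∈ pathEdges p₁ → e ∉ pathEdges p₂) ∨
      (∃ e, (pathEdges p₁ + pathEdges p₂).count e = 1)) :
    (∫ ω, pathX a p₁ ω * pathX a p₂ ω ∂μ) -
      (∫ ω, pathX a p₁ ω ∂μ) * (∫ ω, pathX a p₂ ω ∂μ) = 0 :=
  covariance_of_uncorrelated_paths_vanishes_general μ N s a hmeas hsymm hindep hmean p₁ p₂ h
end

section
/- (Variance as a sum over correlated paths) Fix N and s ≥ 1, and for a closed path P = (i_0 → ⋯ → i_{2s−1} → i_0) on {1,…,N} let X_P = ∏_{k=0}^{2s−1} a_{i_k i_{k+1}}. Then Var(Tr A_N^{2s}) = N^{−2s} · Σ*_{P_1,P_2} ( E[X_{P_1} X_{P_2}] − E[X_{P_1}]·E[X_{P_2}] ), where the starred sum runs exactly over the pairs of closed paths P_1, P_2 of length 2s such that (i) P_1 and P_2 have at least one undirected edge in common and (ii) every undirected edge of the union of P_1 and P_2 is traversed at least twice in total. -/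
open MeasureTheory ProbabilityTheory Filter

/-- Two closed paths are *correlated* if (i) they have at least one undirected
edge in common, and (ii) every undirected edge of their union is traversed at
least twice in total over both paths. -/
def Correlated {N L : ℕ} (p₁ p₂ : Fin L → Fin N) : Prop :=
  (∃ e, e ∈ pathEdges p₁ ∧ e ∈ pathEdges p₂) ∧
    (∀ e, e ∈ pathEdges p₁ + pathEdges p₂ →
      2 ≤ (pathEdges p₁ + pathEdges p₂).count e)

/-! Expanding `Tr A^{2s}` along closed paths gives `N^{-s} ∑_P X_P`, so its variance is
`N^{-2s} ∑_{P₁,P₂} Cov(X_{P₁}, X_{P₂})`. Grouping the factors of `X_P` by undirected edge makes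
it a monomial in the independent centred edge variables, and expectations of such monomials
factor over the edges. If `P₁` and `P₂` share no edge, their monomials involve disjoint sets of
variables, so the covariance vanishes. If some edge is traversed exactly once in total, it occurs
to the first power in `X_{P₁} X_{P₂}` and in one of `X_{P₁}`, `X_{P₂}`, so both terms of the
covariance vanish.
-/

lemma nextIdx_castSucc {n : ℕ} (k : Fin n) : nextIdx k.castSucc = k.succ := by
  ext
  simp [nextIdx, Nat.mod_eq_of_lt (Nat.succ_lt_succ k.isLt)]

lemma nextIdx_last (n : ℕ) : nextIdx (Fin.last n) = 0 := by
  ext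
  simp [nextIdx]

lemma cons_nextIdx_eq_snoc {α : Type*} {n : ℕ} (i : α) (p : Fin n → α) (k : Fin (n + 1)) :
    (Fin.cons i p : Fin (n + 1) → α) (nextIdx k) = (Fin.snoc p i : Fin (n + 1) → α) k := by
  induction k using Fin.lastCases with
  | last => rw [nextIdx_last, Fin.cons_zero, Fin.snoc_last]
  | cast k => rw [nextIdx_castSucc, Fin.cons_succ, Fin.snoc_castSucc]

namespace Matrix

variable {ι R : Type*} [Fintype ι] [DecidableEq ι] [CommSemiring R]

/-- `p` lists the interior vertices of a walk from `i` to `j`: step `k` goes from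
`Fin.cons i p k` to `Fin.snoc p j k`. -/
theorem pow_succ_apply_eq_sum_prod (M : Matrix ι ι R) (n : ℕ) (i j : ι) :
    (M ^ (n + 1)) i j = ∑ p : Fin n → ι, ∏ k : Fin (n + 1),
      M ((Fin.cons i p : Fin (n + 1) → ι) k) ((Fin.snoc p j : Fin (n + 1) → ι) k) := by
  induction n generalizing i with
  | zero => simp [Fin.snoc]
  | succ n ih =>
    rw [pow_succ', mul_apply, ← (Fin.consEquiv fun _ => ι).sum_comp, Fintype.sum_prod_type]
    refine Finset.sum_congr rfl fun x _ => ?_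
    simp only [ih, Finset.mul_sum, Fin.consEquiv, Equiv.coe_fn_mk,
      Fin.prod_univ_succ (n := n + 1), ← Fin.cons_snoc_eq_snoc_cons, Fin.cons_zero, Fin.cons_succ]

theorem trace_pow_eq_sum_prod (M : Matrix ι ι R) {L : ℕ} (hL : 0 < L) :
    (M ^ L).trace = ∑ p : Fin L → ι, ∏ k, M (p k) (p (nextIdx k)) := by
  obtain ⟨n, rfl⟩ : ∃ n, L = n + 1 := ⟨L - 1, by omega⟩
  rw [trace, ← (Fin.consEquiv fun _ => ι).sum_comp, Fintype.sum_prod_type]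
  simp only [diag_apply, pow_succ_apply_eq_sum_prod, Fin.consEquiv, Equiv.coe_fn_mk,
    cons_nextIdx_eq_snoc]

end Matrix

lemma trace_pow_eq_sum_pathX {Ω : Type*} {N s : ℕ} (hs : 1 ≤ s) {a : Fin N → Fin N → Ω → ℝ}
    {A : Ω → Matrix (Fin N) (Fin N) ℝ} (hA : ∀ ω i j, A ω i j = a i j ω / Real.sqrt N) (ω : Ω) :
    (A ω ^ (2 * s)).trace = 1 / (N : ℝ) ^ s * ∑ p : Fin (2 * s) → Fin N, pathX a p ω := by
  have hAω : A ω = (Real.sqrt N)⁻¹ • Matrix.of fun i j => a i j ω := by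
    ext i j
    simp [hA, div_eq_inv_mul]
  have hscale : ((Real.sqrt N)⁻¹) ^ (2 * s) = 1 / (N : ℝ) ^ s := by
    rw [pow_mul, inv_pow, Real.sq_sqrt (Nat.cast_nonneg N), inv_pow, one_div]
  rw [hAω, smul_pow, Matrix.trace_smul, Matrix.trace_pow_eq_sum_prod _ (by omega), hscale,
    smul_eq_mul]
  rfl

/-- The entry at the ordered representative `(i, j)`, `i ≤ j`, of an edge; for a random matrix
this reindexes the family of its upper-triangular entries by `Sym2`. -/
def edgeVar {α β : Type*} [LinearOrder α] (a : α → α → β) (e : Sym2 α) : β :=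
  a (Sym2.sortEquiv e).1.1 (Sym2.sortEquiv e).1.2

lemma edgeVar_mk {α β : Type*} [LinearOrder α] {a : α → α → β} (hsymm : ∀ i j, a i j = a j i)
    (i j : α) : edgeVar a s(i, j) = a i j := by
  rcases le_total i j with h | h
  · simp [edgeVar, Sym2.sortEquiv, h]
  · simp [edgeVar, Sym2.sortEquiv, h, hsymm j i]

lemma Finset.prod_multiset_map_eq_prod_pow_count {α M : Type*} [Fintype α] [DecidableEq α]
    [CommMonoid M] (s : Multiset α) (f : α → M) :
    (s.map f).prod = ∏ x, f x ^ s.count x := by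
  rw [Finset.prod_multiset_map_count]
  refine Finset.prod_subset (Finset.subset_univ _) fun x _ hx => ?_
  rw [Multiset.count_eq_zero.mpr (by simpa using hx), pow_zero]

lemma pathX_eq_prod_edgeVar_pow {Ω : Type*} {N L : ℕ} {a : Fin N → Fin N → Ω → ℝ}
    (hsymm : ∀ i j, a i j = a j i) (p : Fin L → Fin N) (ω : Ω) :
    pathX a p ω = ∏ e, edgeVar a e ω ^ (pathEdges p).count e := by
  rw [← Finset.prod_multiset_map_eq_prod_pow_count, pathEdges, Multiset.map_map]
  exact Finset.prod_congr rfl fun k _ => by simp [edgeVar_mk hsymm]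

namespace ProbabilityTheory

variable {Ω ι : Type*} [MeasurableSpace Ω] {μ : Measure Ω} [Fintype ι] {X : ι → Ω → ℝ}

lemma iIndepFun.integral_prod_pow (hX : iIndepFun X μ) (hmeas : ∀ i, AEMeasurable (X i) μ)
    (m : ι → ℕ) : ∫ ω, ∏ i, X i ω ^ m i ∂μ = ∏ i, ∫ ω, X i ω ^ m i ∂μ :=
  hX.integral_fun_prod_comp hmeas fun i => (continuous_pow (m i)).aestronglyMeasurable

lemma iIndepFun.integral_prod_pow_eq_zero (hX : iIndepFun X μ)
    (hmeas : ∀ i, AEMeasurable (X i) μ) (hmean : ∀ i, ∫ ω, X i ω ∂μ = 0) {m : ι → ℕ} {i : ι}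
    (hi : m i = 1) : ∫ ω, ∏ j, X j ω ^ m j ∂μ = 0 := by
  rw [hX.integral_prod_pow hmeas]
  exact Finset.prod_eq_zero (Finset.mem_univ i) (by simp [hi, hmean])

lemma iIndepFun.integral_prod_pow_add [IsProbabilityMeasure μ] (hX : iIndepFun X μ)
    (hmeas : ∀ i, AEMeasurable (X i) μ) {m₁ m₂ : ι → ℕ} (hdisj : ∀ i, m₁ i = 0 ∨ m₂ i = 0) :
    ∫ ω, ∏ i, X i ω ^ (m₁ i + m₂ i) ∂μ =
      (∫ ω, ∏ i, X i ω ^ m₁ i ∂μ) * ∫ ω, ∏ i, X i ω ^ m₂ i ∂μ := by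
  simp only [hX.integral_prod_pow hmeas, ← Finset.prod_mul_distrib]
  refine Finset.prod_congr rfl fun i _ => ?_
  rcases hdisj i with h | h <;> simp [h]

end ProbabilityTheory

lemma correlated_iff_count {N L : ℕ} (p₁ p₂ : Fin L → Fin N) :
    Correlated p₁ p₂ ↔
      (∃ e, (pathEdges p₁).count e ≠ 0 ∧ (pathEdges p₂).count e ≠ 0) ∧
        ∀ e, (pathEdges p₁).count e + (pathEdges p₂).count e ≠ 1 := by
  simp only [Correlated, ← Multiset.count_ne_zero, ← Multiset.count_add]
  refine and_congr Iff.rfl (forall_congr' fun e => ?_)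
  omega

section PathMoments

variable {Ω : Type*} [MeasurableSpace Ω] {μ : Measure Ω} {N L : ℕ} {a : Fin N → Fin N → Ω → ℝ}

lemma memLp_top_pathX {C : ℝ} (hmeas : ∀ i j, AEStronglyMeasurable (a i j) μ)
    (hbdd : ∀ i j, ∀ᵐ ω ∂μ, |a i j ω| ≤ C) (p : Fin L → Fin N) : MemLp (pathX a p) ⊤ μ := by
  unfold pathX
  simpa using MemLp.prod' (s := Finset.univ) (p := fun _ => ⊤) fun k _ =>
    memLp_top_of_bound (hmeas (p k) (p (nextIdx k))) C (hbdd _ _)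

lemma integral_pathX_mul_eq_mul_of_not_correlated [IsProbabilityMeasure μ]
    (hmeas : ∀ i j, AEMeasurable (a i j) μ) (hsymm : ∀ i j, a i j = a j i)
    (hindep : iIndepFun (fun q : {q : Fin N × Fin N // q.1 ≤ q.2} => a q.1.1 q.1.2) μ)
    (hmean : ∀ i j, ∫ ω, a i j ω ∂μ = 0) {p₁ p₂ : Fin L → Fin N} (h : ¬ Correlated p₁ p₂) :
    ∫ ω, pathX a p₁ ω * pathX a p₂ ω ∂μ = (∫ ω, pathX a p₁ ω ∂μ) * ∫ ω, pathX a p₂ ω ∂μ := by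
  have hX : iIndepFun (edgeVar a) μ :=
    hindep.precomp (g := Sym2.sortEquiv) Sym2.sortEquiv.injective
  have hXmeas : ∀ e, AEMeasurable (edgeVar a e) μ := fun e => hmeas _ _
  have hXmean : ∀ e, ∫ ω, edgeVar a e ω ∂μ = 0 := fun e => hmean _ _
  simp only [pathX_eq_prod_edgeVar_pow hsymm, ← Finset.prod_mul_distrib, ← pow_add]
  rw [correlated_iff_count, not_and_or] at h
  push Not at h
  rcases h with hdisj | ⟨e, he⟩
  · exact hX.integral_prod_pow_add hXmeas fun e => by tauto
  · rw [hX.integral_prod_pow_eq_zero hXmeas hXmean he]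
    rcases Nat.add_eq_one_iff.mp he with ⟨-, h₂⟩ | ⟨h₁, -⟩
    · exact (mul_eq_zero_of_right _ (hX.integral_prod_pow_eq_zero hXmeas hXmean h₂)).symm
    · exact (mul_eq_zero_of_left (hX.integral_prod_pow_eq_zero hXmeas hXmean h₁) _).symm

end PathMoments

open Classical in
theorem variance_eq_sum_over_correlated_paths
    {Ω : Type*} [MeasurableSpace Ω] (μ : Measure Ω) [IsProbabilityMeasure μ]
    (N s : ℕ) (hs : 1 ≤ s)
    (a : Fin N → Fin N → Ω → ℝ) (C : ℝ)
    (hmeas : ∀ i j, Measurable (a i j))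
    (hsymm : ∀ i j, a i j = a j i)
    (hindep : iIndepFun
      (fun q : {q : Fin N × Fin N // q.1 ≤ q.2} => a q.1.1 q.1.2) μ)
    (hmean : ∀ i j, ∫ ω, a i j ω ∂μ = 0)
    (hbdd : ∀ i j, ∀ᵐ ω ∂μ, |a i j ω| ≤ C)
    (A : Ω → Matrix (Fin N) (Fin N) ℝ)
    (hA : ∀ ω i j, A ω i j = a i j ω / Real.sqrt N) :
    (∫ ω, (Matrix.trace ((A ω) ^ (2 * s))) ^ 2 ∂μ) -
        (∫ ω, Matrix.trace ((A ω) ^ (2 * s)) ∂μ) ^ 2 =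
      (1 / (N : ℝ) ^ (2 * s)) *
        ∑ p₁ : Fin (2 * s) → Fin N, ∑ p₂ : Fin (2 * s) → Fin N,
          if Correlated p₁ p₂ then
            (∫ ω, pathX a p₁ ω * pathX a p₂ ω ∂μ) -
              (∫ ω, pathX a p₁ ω ∂μ) * (∫ ω, pathX a p₂ ω ∂μ)
          else 0 := by
  have hX : ∀ p : Fin (2 * s) → Fin N, MemLp (pathX a p) 2 μ := fun p =>
    (memLp_top_pathX (fun i j => (hmeas i j).aestronglyMeasurable) hbdd p).mono_exponent le_top
  have hT : (fun ω => (A ω ^ (2 * s)).trace) =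
      fun ω => 1 / (N : ℝ) ^ s * ∑ p : Fin (2 * s) → Fin N, pathX a p ω :=
    funext (trace_pow_eq_sum_pathX hs hA)
  have hT₂ : MemLp (fun ω => (A ω ^ (2 * s)).trace) 2 μ := by
    rw [hT]
    exact (memLp_finsetSum _ fun p _ => hX p).const_mul _
  calc _ = Var[fun ω => (A ω ^ (2 * s)).trace; μ] := (variance_eq_sub hT₂).symm
    _ = 1 / (N : ℝ) ^ (2 * s) * ∑ p₁ : Fin (2 * s) → Fin N, ∑ p₂ : Fin (2 * s) → Fin N,
          cov[pathX a p₁, pathX a p₂; μ] := by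
      rw [hT, variance_const_mul, variance_fun_sum hX, div_pow, one_pow, ← pow_mul, mul_comm s]
    _ = _ := by
      congr 1
      refine Finset.sum_congr rfl fun p₁ _ => Finset.sum_congr rfl fun p₂ _ => ?_
      rw [covariance_eq_sub (hX p₁) (hX p₂)]
      split_ifs with h
      · rfl
      · exact sub_eq_zero.mpr (integral_pathX_mul_eq_mul_of_not_correlated
          (fun i j => (hmeas i j).aemeasurable) hsymm hindep hmean h)
end
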